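/- There exist no 2×2 complex matrices M_0, M_1, M_2 such that T_3(M_0, M_1, M_2) = e_0 ⊗ e_1 ⊗ e_2 + e_1 ⊗ e_2 ⊗ e_0 + e_2 ⊗ e_0 ⊗ e_1; that is, the cyclic tensor e_{012} is not in uMPS(2, 3, 3). -/
import Mathlib


open Matrix BigOperators

/-- The coefficient tensor of the uniform matrix product state
`T_N(M_0,…,M_{d-1}) = Σ tr(M_{i_1} ⋯ M_{i_N}) e_{i_1} ⊗ ⋯ ⊗ e_{i_N}`,
identified with its coefficient function `(Fin N → Fin d) → ℂ`. -/
noncomputable def uT (D d N : ℕ) (M : Fin d → Matrix (Fin D) (Fin D) ℂ) :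
    (Fin N → Fin d) → ℂ :=
  fun v => Matrix.trace (List.ofFn fun k => M (v k)).prod

/-- The set of uniform matrix product states in `(ℂ^d)^{⊗N}`. -/
noncomputable def uMPS (D d N : ℕ) : Set ((Fin N → Fin d) → ℂ) :=
  Set.range (uT D d N)

/-- The coefficient tensor of
`e_{012} = e_0 ⊗ e_1 ⊗ e_2 + e_1 ⊗ e_2 ⊗ e_0 + e_2 ⊗ e_0 ⊗ e_1`. -/
noncomputable def e012 : (Fin 3 → Fin 3) → ℂ :=
  fun v => (if v = ![0, 1, 2] then 1 else 0) + (if v = ![1, 2, 0] then 1 else 0) +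
    (if v = ![2, 0, 1] then 1 else 0)

private lemma key_scalar (t0 t1 t2 d0 d1 d2 s01 s02 s12 : ℂ)
    (hA0 : t0^3 - 3*d0*t0 = 0) (hA1 : t1^3 - 3*d1*t1 = 0) (hA2 : t2^3 - 3*d2*t2 = 0)
    (hB01 : t0*s01 - d0*t1 = 0) (hB10 : t1*s01 - d1*t0 = 0)
    (hB02 : t0*s02 - d0*t2 = 0) (hB20 : t2*s02 - d2*t0 = 0)
    (hB12 : t1*s12 - d1*t2 = 0) (hB21 : t2*s12 - d2*t1 = 0)
    (hC : t0*s12 + t1*s02 + t2*s01 - t0*t1*t2 = 1)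
    (hD : s01*s02*s12 + d2*s01^2 + d1*s02^2 + d0*s12^2 - 4*d0*d1*d2
      + t2^2*d0*d1 + t1^2*d0*d2 + t0^2*d1*d2
      - t1*t2*d0*s12 - t0*t2*d1*s02 - t0*t1*d2*s01 = 0) : False := by
  have cancel : ∀ x y : ℂ, x ≠ 0 → x*y = 0 → y = 0 := by
    intro x y hx h
    exact (mul_eq_zero.mp h).resolve_left hx
  rcases eq_or_ne t0 0 with h0 | h0 <;> rcases eq_or_ne t1 0 with h1 | h1 <;>
      rcases eq_or_ne t2 0 with h2 | h2
  · -- t0 = t1 = t2 = 0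
    subst h0; subst h1; subst h2
    exact one_ne_zero (by linear_combination -hC)
  · -- t0 = 0, t1 = 0, t2 ≠ 0
    subst h0; subst h1
    have hd2 : t2^2 - 3*d2 = 0 := cancel t2 _ h2 (by linear_combination hA2)
    have hd0 : d0 = 0 := cancel t2 _ h2 (by linear_combination -hB02)
    have hd1 : d1 = 0 := cancel t2 _ h2 (by linear_combination -hB12)
    have hs02 : s02 = 0 := cancel t2 _ h2 (by linear_combination hB20)
    have hs12 : s12 = 0 := cancel t2 _ h2 (by linear_combination hB21)
    subst hd0; subst hd1; subst hs02; subst hs12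
    exact one_ne_zero (by linear_combination (-(t2*s01+1))*hC + s01^2*hd2 + 3*hD)
  · -- t0 = 0, t1 ≠ 0, t2 = 0
    subst h0; subst h2
    have hd1 : t1^2 - 3*d1 = 0 := cancel t1 _ h1 (by linear_combination hA1)
    have hd0 : d0 = 0 := cancel t1 _ h1 (by linear_combination -hB01)
    have hd2 : d2 = 0 := cancel t1 _ h1 (by linear_combination -hB21)
    have hs01 : s01 = 0 := cancel t1 _ h1 (by linear_combination hB10)
    have hs12 : s12 = 0 := cancel t1 _ h1 (by linear_combination hB12)
    subst hd0; subst hd2; subst hs01; subst hs12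
    exact one_ne_zero (by linear_combination (-(t1*s02+1))*hC + s02^2*hd1 + 3*hD)
  · -- t0 = 0, t1 ≠ 0, t2 ≠ 0
    subst h0
    have hs01 : s01 = 0 := cancel t1 _ h1 (by linear_combination hB10)
    have hs02 : s02 = 0 := cancel t2 _ h2 (by linear_combination hB20)
    subst hs01; subst hs02
    exact one_ne_zero (by linear_combination -hC)
  · -- t0 ≠ 0, t1 = 0, t2 = 0
    subst h1; subst h2
    have hd0 : t0^2 - 3*d0 = 0 := cancel t0 _ h0 (by linear_combination hA0)
    have hd1 : d1 = 0 := cancel t0 _ h0 (by linear_combination -hB10)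
    have hd2 : d2 = 0 := cancel t0 _ h0 (by linear_combination -hB20)
    have hs01 : s01 = 0 := cancel t0 _ h0 (by linear_combination hB01)
    have hs02 : s02 = 0 := cancel t0 _ h0 (by linear_combination hB02)
    subst hd1; subst hd2; subst hs01; subst hs02
    exact one_ne_zero (by linear_combination (-(t0*s12+1))*hC + s12^2*hd0 + 3*hD)
  · -- t0 ≠ 0, t1 = 0, t2 ≠ 0
    subst h1
    have hs01 : s01 = 0 := cancel t0 _ h0 (by linear_combination hB01)
    have hs12 : s12 = 0 := cancel t2 _ h2 (by linear_combination hB21)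
    subst hs01; subst hs12
    exact one_ne_zero (by linear_combination -hC)
  · -- t0 ≠ 0, t1 ≠ 0, t2 = 0
    subst h2
    have hs02 : s02 = 0 := cancel t0 _ h0 (by linear_combination hB02)
    have hs12 : s12 = 0 := cancel t1 _ h1 (by linear_combination hB12)
    subst hs02; subst hs12
    exact one_ne_zero (by linear_combination -hC)
  · -- all nonzero
    have hd0 : t0^2 - 3*d0 = 0 := cancel t0 _ h0 (by linear_combination hA0)
    have hd1 : t1^2 - 3*d1 = 0 := cancel t1 _ h1 (by linear_combination hA1)
    have hd2 : t2^2 - 3*d2 = 0 := cancel t2 _ h2 (by linear_combination hA2)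
    have h3s12 : 3*s12 - t1*t2 = 0 := cancel t1 _ h1 (by linear_combination 3*hB12 - t2*hd1)
    have h3s02 : 3*s02 - t0*t2 = 0 := cancel t0 _ h0 (by linear_combination 3*hB02 - t2*hd0)
    have h3s01 : 3*s01 - t0*t1 = 0 := cancel t0 _ h0 (by linear_combination 3*hB01 - t1*hd0)
    exact one_ne_zero (by
      linear_combination -hC + (t0/3)*h3s12 + (t1/3)*h3s02 + (t2/3)*h3s01)

/-- There are no `2 × 2` complex matrices `M₀, M₁, M₂` with `T_3(M₀,M₁,M₂) = e_{012}`;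
i.e. `e_{012} ∉ uMPS(2,3,3)`. -/
theorem stmt_15 : ¬ ∃ M : Fin 3 → Matrix (Fin 2) (Fin 2) ℂ, uT 2 3 3 M = e012 := by
  rintro ⟨M, hM⟩
  have e : ∀ i j k : Fin 3, (M i * (M j * M k)).trace = e012 ![i,j,k] := by
    intro i j k
    have := congrFun hM ![i,j,k]
    simpa [uT, List.ofFn_succ] using this
  have h000 : (M 0 * (M 0 * M 0)).trace = 0 := by
    have := e 0 0 0; simp +decide [e012] at this; exact this
  have h111 : (M 1 * (M 1 * M 1)).trace = 0 := by
    have := e 1 1 1; simp +decide [e012] at this; exact this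
  have h222 : (M 2 * (M 2 * M 2)).trace = 0 := by
    have := e 2 2 2; simp +decide [e012] at this; exact this
  have h100 : (M 1 * (M 0 * M 0)).trace = 0 := by
    have := e 1 0 0; simp +decide [e012] at this; exact this
  have h011 : (M 0 * (M 1 * M 1)).trace = 0 := by
    have := e 0 1 1; simp +decide [e012] at this; exact this
  have h200 : (M 2 * (M 0 * M 0)).trace = 0 := by
    have := e 2 0 0; simp +decide [e012] at this; exact this
  have h022 : (M 0 * (M 2 * M 2)).trace = 0 := by
    have := e 0 2 2; simp +decide [e012] at this; exact this
  have h211 : (M 2 * (M 1 * M 1)).trace = 0 := by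
    have := e 2 1 1; simp +decide [e012] at this; exact this
  have h122 : (M 1 * (M 2 * M 2)).trace = 0 := by
    have := e 1 2 2; simp +decide [e012] at this; exact this
  have h012 : (M 0 * (M 1 * M 2)).trace = 1 := by
    have := e 0 1 2; simp +decide [e012] at this; exact this
  have h021 : (M 0 * (M 2 * M 1)).trace = 0 := by
    have := e 0 2 1; simp +decide [e012] at this; exact this
  have hpq : (M 0 * (M 1 * M 2)).trace * (M 0 * (M 2 * M 1)).trace = 0 := by
    rw [h012, h021]; ring
  clear hM e
  apply key_scalar (M 0).trace (M 1).trace (M 2).trace (M 0).det (M 1).det (M 2).det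
    (M 0 * M 1).trace (M 0 * M 2).trace (M 1 * M 2).trace
  all_goals
    simp only [Matrix.trace_fin_two, Matrix.det_fin_two, Matrix.mul_apply,
      Fin.sum_univ_two] at h000 h111 h222 h100 h011 h200 h022 h211 h122 h012 h021 hpq ⊢
  · linear_combination h000
  · linear_combination h111
  · linear_combination h222
  · linear_combination h100
  · linear_combination h011
  · linear_combination h200
  · linear_combination h022
  · linear_combination h211
  · linear_combination h122
  · linear_combination h012 + h021
  · linear_combination hpq
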